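/- arXiv:2504.14127 — 2 statements merged into one kernel-verified Lean document; each statement's English description precedes it below -/
import Mathlib

section
/- Let a finite population have potential outcome vectors Y(1), Y(0) ∈ [y_min, y_max]^N and fixed treatment assignment X with 0 < N₁ < N treated units. The identified set for ATE = (1/N)∑ᵢ(Yᵢ(1) − Yᵢ(0)) under K-approximate mean balance is the interval Θ_I(K) = [LB_K(1) − UB_K(0), UB_K(1) − LB_K(0)], where LB_K and UB_K are the lower and upper bounds for the population means of Y(1) and Y(0) respectively. In particular, when K = 0 the identified set collapses to the singleton {Ȳ₁ − Ȳ₀}, the observed difference in group means. -/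
open Finset

def grp (N : ℕ) (X : Fin N → Bool) (b : Bool) : Finset (Fin N) :=
  Finset.univ.filter (fun i => X i = b)

noncomputable def gmean (N : ℕ) (X : Fin N → Bool) (b : Bool) (A : Fin N → ℝ) : ℝ :=
  (∑ i ∈ grp N X b, A i) / ((grp N X b).card : ℝ)

lemma mean_mem_Icc {N : ℕ} (X : Fin N → Bool) (b : Bool) (A : Fin N → ℝ)
    {a c : ℝ} (hne : (grp N X b).Nonempty) (h : ∀ i, A i ∈ Set.Icc a c) :
    gmean N X b A ∈ Set.Icc a c := by
  have hc : (0:ℝ) < ((grp N X b).card : ℝ) := by exact_mod_cast hne.card_pos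
  rw [gmean]
  constructor
  · rw [le_div_iff₀ hc]
    calc a * ((grp N X b).card : ℝ) = ∑ _i ∈ grp N X b, a := by
          rw [Finset.sum_const, nsmul_eq_mul, mul_comm]
      _ ≤ ∑ i ∈ grp N X b, A i := Finset.sum_le_sum (fun i _ => (h i).1)
  · rw [div_le_iff₀ hc]
    calc ∑ i ∈ grp N X b, A i ≤ ∑ _i ∈ grp N X b, c :=
          Finset.sum_le_sum (fun i _ => (h i).2)
      _ = c * ((grp N X b).card : ℝ) := by rw [Finset.sum_const, nsmul_eq_mul, mul_comm]

lemma sum_split {N : ℕ} (X : Fin N → Bool) (f : Fin N → ℝ) :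
    ∑ i, f i = ∑ i ∈ grp N X true, f i + ∑ i ∈ grp N X false, f i := by
  rw [grp, grp, ← Finset.sum_filter_add_sum_filter_not Finset.univ (fun i => X i = true) f]
  congr 1
  apply Finset.sum_congr _ (fun _ _ => rfl)
  apply Finset.filter_congr
  intro i _
  simp [Bool.not_eq_true]

lemma gmean_eq_of_eqOn {N : ℕ} {X : Fin N → Bool} {b : Bool} {A B : Fin N → ℝ}
    (h : ∀ i ∈ grp N X b, A i = B i) : gmean N X b A = gmean N X b B := by
  rw [gmean, gmean, Finset.sum_congr rfl h]

lemma gmean_const {N : ℕ} {X : Fin N → Bool} {b : Bool} {A : Fin N → ℝ} {c : ℝ}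
    (hne : (grp N X b).Nonempty) (h : ∀ i ∈ grp N X b, A i = c) : gmean N X b A = c := by
  have hc : ((grp N X b).card : ℝ) ≠ 0 := by
    exact_mod_cast hne.card_pos.ne'
  rw [gmean, Finset.sum_congr rfl h, Finset.sum_const, nsmul_eq_mul, mul_comm,
    mul_div_assoc, div_self hc, mul_one]

lemma sum_grp_eq {N : ℕ} {X : Fin N → Bool} {b : Bool} (A : Fin N → ℝ)
    (hne : (grp N X b).Nonempty) :
    ∑ i ∈ grp N X b, A i = gmean N X b A * ((grp N X b).card : ℝ) := by
  have hc : ((grp N X b).card : ℝ) ≠ 0 := by exact_mod_cast hne.card_pos.ne'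
  rw [gmean, div_mul_cancel₀ _ hc]


/-- Lower bound for the population mean of `Y(b)` under `K`-approximate balance. -/
noncomputable def LB (N : ℕ) (X : Fin N → Bool) (ymin : ℝ) (K : ℝ) (b : Bool)
    (Yobs : Fin N → ℝ) : ℝ :=
  gmean N X b Yobs * ((grp N X b).card : ℝ) / N
    + max ymin (gmean N X b Yobs - K) * ((grp N X (!b)).card : ℝ) / N

/-- Upper bound for the population mean of `Y(b)` under `K`-approximate balance. -/
noncomputable def UB (N : ℕ) (X : Fin N → Bool) (ymax : ℝ) (K : ℝ) (b : Bool)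
    (Yobs : Fin N → ℝ) : ℝ :=
  gmean N X b Yobs * ((grp N X b).card : ℝ) / N
    + min ymax (gmean N X b Yobs + K) * ((grp N X (!b)).card : ℝ) / N

set_option maxHeartbeats 1000000 in
/-- the identified set for ATE under `K`-approximate mean balance is
`[LB_K(1) - UB_K(0), UB_K(1) - LB_K(0)]`, and it collapses to the observed difference in
means when `K = 0`.  `Yobs` is the vector of realized (observed) outcomes. -/
theorem statement2
    (N N₁ : ℕ) (hN : 2 ≤ N)
    (ymin ymax : ℝ) (hy : ymin < ymax)
    (Yobs : Fin N → ℝ)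
    (X : Fin N → Bool)
    (hN₁ : (grp N X true).card = N₁) (hN₁pos : 0 < N₁) (hN₁lt : N₁ < N)
    (hbdd : ∀ i, Yobs i ∈ Set.Icc ymin ymax)
    (K : ℝ) (hK : 0 ≤ K) :
    {θ : ℝ | ∃ Y1 Y0 : Fin N → ℝ,
        (∀ i, X i = true → Y1 i = Yobs i) ∧
        (∀ i, X i = false → Y0 i = Yobs i) ∧
        (∀ i, Y1 i ∈ Set.Icc ymin ymax) ∧
        (∀ i, Y0 i ∈ Set.Icc ymin ymax) ∧
        |gmean N X true Y1 - gmean N X false Y1| ≤ K ∧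
        |gmean N X true Y0 - gmean N X false Y0| ≤ K ∧
        θ = (∑ i, (Y1 i - Y0 i)) / N}
      = Set.Icc (LB N X ymin K true Yobs - UB N X ymax K false Yobs)
          (UB N X ymax K true Yobs - LB N X ymin K false Yobs)
    ∧ (K = 0 →
        Set.Icc (LB N X ymin K true Yobs - UB N X ymax K false Yobs)
            (UB N X ymax K true Yobs - LB N X ymin K false Yobs)
          = {gmean N X true Yobs - gmean N X false Yobs}) := by
  have hNpos : 0 < N := by omega
  have hNR : (0:ℝ) < (N:ℝ) := by exact_mod_cast hNpos
  have hNne : (N:ℝ) ≠ 0 := ne_of_gt hNR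
  have hgrpF : grp N X false = Finset.univ.filter (fun i => ¬ (X i = true)) := by
    rw [grp]
    apply Finset.filter_congr
    intro i _
    simp
  have hcards : (grp N X true).card + (grp N X false).card = N := by
    rw [hgrpF, grp, Finset.card_filter_add_card_filter_not, Finset.card_fin]
  have hn1pos : 0 < (grp N X true).card := hN₁ ▸ hN₁pos
  have hn0pos : 0 < (grp N X false).card := by omega
  have hne1 : (grp N X true).Nonempty := Finset.card_pos.mp hn1pos
  have hne0 : (grp N X false).Nonempty := Finset.card_pos.mp hn0pos
  have hR1 : (0:ℝ) < ((grp N X true).card : ℝ) := by exact_mod_cast hn1pos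
  have hR0 : (0:ℝ) < ((grp N X false).card : ℝ) := by exact_mod_cast hn0pos
  have hcardsR : ((grp N X true).card : ℝ) + ((grp N X false).card : ℝ) = (N:ℝ) := by
    exact_mod_cast hcards
  have hm1 : gmean N X true Yobs ∈ Set.Icc ymin ymax := mean_mem_Icc X true Yobs hne1 hbdd
  have hm0 : gmean N X false Yobs ∈ Set.Icc ymin ymax := mean_mem_Icc X false Yobs hne0 hbdd
  -- single-fraction forms of the endpoints
  have hLO : LB N X ymin K true Yobs - UB N X ymax K false Yobs
      = (gmean N X true Yobs * ((grp N X true).card : ℝ)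
          + max ymin (gmean N X true Yobs - K) * ((grp N X false).card : ℝ)
          - (min ymax (gmean N X false Yobs + K) * ((grp N X true).card : ℝ)
          + gmean N X false Yobs * ((grp N X false).card : ℝ))) / N := by
    simp only [LB, UB, Bool.not_true, Bool.not_false]
    ring
  have hHI : UB N X ymax K true Yobs - LB N X ymin K false Yobs
      = (gmean N X true Yobs * ((grp N X true).card : ℝ)
          + min ymax (gmean N X true Yobs + K) * ((grp N X false).card : ℝ)
          - (max ymin (gmean N X false Yobs - K) * ((grp N X true).card : ℝ)
          + gmean N X false Yobs * ((grp N X false).card : ℝ))) / N := by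
    simp only [LB, UB, Bool.not_true, Bool.not_false]
    ring
  have hab1 : max ymin (gmean N X true Yobs - K) ≤ min ymax (gmean N X true Yobs + K) := by
    rcases hm1 with ⟨h1, h2⟩
    exact max_le (le_min hy.le (by linarith)) (le_min (by linarith) (by linarith))
  have hab0 : max ymin (gmean N X false Yobs - K) ≤ min ymax (gmean N X false Yobs + K) := by
    rcases hm0 with ⟨h1, h2⟩
    exact max_le (le_min hy.le (by linarith)) (le_min (by linarith) (by linarith))
  constructor
  · ext θ
    simp only [Set.mem_setOf_eq, Set.mem_Icc]
    constructor
    · rintro ⟨Y1, Y0, hY1obs, hY0obs, hY1b, hY0b, hbal1, hbal0, hθ⟩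
      have ht1b : gmean N X false Y1 ∈ Set.Icc ymin ymax := mean_mem_Icc X false Y1 hne0 hY1b
      have ht0b : gmean N X true Y0 ∈ Set.Icc ymin ymax := mean_mem_Icc X true Y0 hne1 hY0b
      have hg1 : gmean N X true Y1 = gmean N X true Yobs :=
        gmean_eq_of_eqOn (fun i hi => hY1obs i (by simpa [grp] using hi))
      have hg0 : gmean N X false Y0 = gmean N X false Yobs :=
        gmean_eq_of_eqOn (fun i hi => hY0obs i (by simpa [grp] using hi))
      rw [hg1, abs_le] at hbal1
      rw [hg0, abs_le] at hbal0
      have hθ' : θ = (gmean N X true Yobs * ((grp N X true).card : ℝ)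
          + gmean N X false Y1 * ((grp N X false).card : ℝ)
          - (gmean N X true Y0 * ((grp N X true).card : ℝ)
          + gmean N X false Yobs * ((grp N X false).card : ℝ))) / N := by
        have eY1 : ∑ i ∈ grp N X true, Y1 i = ∑ i ∈ grp N X true, Yobs i :=
          Finset.sum_congr rfl (fun i hi => hY1obs i (by simpa [grp] using hi))
        have eY0 : ∑ i ∈ grp N X false, Y0 i = ∑ i ∈ grp N X false, Yobs i :=
          Finset.sum_congr rfl (fun i hi => hY0obs i (by simpa [grp] using hi))
        rw [hθ, Finset.sum_sub_distrib, sum_split X Y1, sum_split X Y0, eY1, eY0]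
        rw [sum_grp_eq Yobs hne1, sum_grp_eq Y1 hne0, sum_grp_eq Y0 hne1,
          sum_grp_eq Yobs hne0]
        try ring
      have hlt1 : max ymin (gmean N X true Yobs - K) ≤ gmean N X false Y1 :=
        max_le ht1b.1 (by linarith [hbal1.2])
      have hgt1 : gmean N X false Y1 ≤ min ymax (gmean N X true Yobs + K) :=
        le_min ht1b.2 (by linarith [hbal1.1])
      have hlt0 : max ymin (gmean N X false Yobs - K) ≤ gmean N X true Y0 :=
        max_le ht0b.1 (by linarith [hbal0.1])
      have hgt0 : gmean N X true Y0 ≤ min ymax (gmean N X false Yobs + K) :=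
        le_min ht0b.2 (by linarith [hbal0.2])
      rw [hLO, hHI, hθ']
      constructor
      · rw [div_le_div_iff_of_pos_right hNR]
        nlinarith [mul_nonneg (sub_nonneg.mpr hlt1) hR0.le,
          mul_nonneg (sub_nonneg.mpr hgt0) hR1.le]
      · rw [div_le_div_iff_of_pos_right hNR]
        nlinarith [mul_nonneg (sub_nonneg.mpr hgt1) hR0.le,
          mul_nonneg (sub_nonneg.mpr hlt0) hR1.le]
    · rintro ⟨hlo, hhi⟩
      obtain ⟨l, hl0, hl1, hθl⟩ : ∃ l : ℝ, 0 ≤ l ∧ l ≤ 1 ∧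
          θ = (LB N X ymin K true Yobs - UB N X ymax K false Yobs)
            + l * ((UB N X ymax K true Yobs - LB N X ymin K false Yobs)
                - (LB N X ymin K true Yobs - UB N X ymax K false Yobs)) := by
        by_cases hd : (UB N X ymax K true Yobs - LB N X ymin K false Yobs)
            - (LB N X ymin K true Yobs - UB N X ymax K false Yobs) = 0
        · exact ⟨0, le_refl _, zero_le_one, by rw [zero_mul, add_zero]; linarith⟩
        · refine ⟨(θ - (LB N X ymin K true Yobs - UB N X ymax K false Yobs)) /
              ((UB N X ymax K true Yobs - LB N X ymin K false Yobs)
                - (LB N X ymin K true Yobs - UB N X ymax K false Yobs)), ?_, ?_, ?_⟩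
          · apply div_nonneg (by linarith)
            linarith [lt_of_le_of_ne (by linarith : (0:ℝ) ≤ _) (Ne.symm hd)]
          · rw [div_le_one (lt_of_le_of_ne (by linarith) (Ne.symm hd))]
            linarith
          · rw [div_mul_cancel₀ _ hd]
            ring
      set c1 : ℝ := max ymin (gmean N X true Yobs - K)
        + l * (min ymax (gmean N X true Yobs + K) - max ymin (gmean N X true Yobs - K))
        with hc1def
      set c0 : ℝ := min ymax (gmean N X false Yobs + K)
        + l * (max ymin (gmean N X false Yobs - K) - min ymax (gmean N X false Yobs + K))
        with hc0def
      have hc1lo : max ymin (gmean N X true Yobs - K) ≤ c1 := by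
        rw [hc1def]; nlinarith
      have hc1hi : c1 ≤ min ymax (gmean N X true Yobs + K) := by
        rw [hc1def]; nlinarith
      have hc0lo : max ymin (gmean N X false Yobs - K) ≤ c0 := by
        rw [hc0def]; nlinarith
      have hc0hi : c0 ≤ min ymax (gmean N X false Yobs + K) := by
        rw [hc0def]; nlinarith
      refine ⟨fun i => if X i = true then Yobs i else c1,
        fun i => if X i = true then c0 else Yobs i, ?_, ?_, ?_, ?_, ?_, ?_, ?_⟩
      · intro i hi; simp [hi]
      · intro i hi; simp [hi]
      · intro i
        by_cases hi : X i = true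
        · simpa [hi] using hbdd i
        · simp only [hi, if_false]
          exact ⟨le_trans (le_max_left _ _) hc1lo, le_trans hc1hi (min_le_left _ _)⟩
      · intro i
        by_cases hi : X i = true
        · simp only [hi, if_true]
          exact ⟨le_trans (le_max_left _ _) hc0lo, le_trans hc0hi (min_le_left _ _)⟩
        · simpa [hi] using hbdd i
      · have e1 : gmean N X true (fun i => if X i = true then Yobs i else c1)
            = gmean N X true Yobs :=
          gmean_eq_of_eqOn (fun i hi => by
            have : X i = true := by simpa [grp] using hi
            simp [this])
        have e2 : gmean N X false (fun i => if X i = true then Yobs i else c1) = c1 :=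
          gmean_const hne0 (fun i hi => by
            have : X i = false := by simpa [grp] using hi
            simp [this])
        rw [e1, e2, abs_le]
        constructor
        · linarith [le_trans hc1hi (min_le_right _ _)]
        · linarith [le_trans (le_max_right _ _) hc1lo]
      · have e1 : gmean N X true (fun i => if X i = true then c0 else Yobs i) = c0 :=
          gmean_const hne1 (fun i hi => by
            have : X i = true := by simpa [grp] using hi
            simp [this])
        have e2 : gmean N X false (fun i => if X i = true then c0 else Yobs i)
            = gmean N X false Yobs :=
          gmean_eq_of_eqOn (fun i hi => by
            have : X i = false := by simpa [grp] using hi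
            simp [this])
        rw [e1, e2, abs_le]
        constructor
        · linarith [le_trans (le_max_right _ _) hc0lo]
        · linarith [le_trans hc0hi (min_le_right _ _)]
      · -- value of the ATE
        have hs1 : ∑ i, (if X i = true then Yobs i else c1)
            = gmean N X true Yobs * ((grp N X true).card : ℝ)
              + c1 * ((grp N X false).card : ℝ) := by
          rw [sum_split X]
          rw [Finset.sum_congr rfl (fun i hi => by
              have : X i = true := by simpa [grp] using hi
              simp [this] : ∀ i ∈ grp N X true, (if X i = true then Yobs i else c1) = Yobs i),
            Finset.sum_congr rfl (fun i hi => by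
              have : X i = false := by simpa [grp] using hi
              simp [this] : ∀ i ∈ grp N X false, (if X i = true then Yobs i else c1) = c1)]
          rw [sum_grp_eq Yobs hne1, Finset.sum_const, nsmul_eq_mul]
          ring
        have hs0 : ∑ i, (if X i = true then c0 else Yobs i)
            = c0 * ((grp N X true).card : ℝ)
              + gmean N X false Yobs * ((grp N X false).card : ℝ) := by
          rw [sum_split X]
          rw [Finset.sum_congr rfl (fun i hi => by
              have : X i = true := by simpa [grp] using hi
              simp [this] : ∀ i ∈ grp N X true, (if X i = true then c0 else Yobs i) = c0),
            Finset.sum_congr rfl (fun i hi => by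
              have : X i = false := by simpa [grp] using hi
              simp [this] : ∀ i ∈ grp N X false, (if X i = true then c0 else Yobs i) = Yobs i)]
          rw [sum_grp_eq Yobs hne0, Finset.sum_const, nsmul_eq_mul]
          ring
        rw [Finset.sum_sub_distrib, hs1, hs0, hθl, hLO, hHI, hc1def, hc0def]
        ring
  · intro hK0
    subst hK0
    have hLBt : LB N X ymin 0 true Yobs = gmean N X true Yobs := by
      rw [LB, sub_zero, max_eq_right hm1.1, Bool.not_true]
      field_simp
      rw [← hcardsR]
    have hUBt : UB N X ymax 0 true Yobs = gmean N X true Yobs := by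
      rw [UB, add_zero, min_eq_right hm1.2, Bool.not_true]
      field_simp
      rw [← hcardsR]
    have hLBf : LB N X ymin 0 false Yobs = gmean N X false Yobs := by
      rw [LB, sub_zero, max_eq_right hm0.1, Bool.not_false]
      field_simp
      rw [← hcardsR]
      ring
    have hUBf : UB N X ymax 0 false Yobs = gmean N X false Yobs := by
      rw [UB, add_zero, min_eq_right hm0.2, Bool.not_false]
      field_simp
      rw [← hcardsR]
      ring
    rw [hLBt, hUBt, hLBf, hUBf, Set.Icc_self]
end

section
/- Fix N ≥ 2, 0 < N₁ < N, observed outcomes Y₁,…,Y_{N₁} ∈ [y_min, y_max] for the treated units, with y_min < y_max, and the uniform randomization design on assignments x ∈ {0,1}^N with ∑ᵢ xᵢ = N₁. Then there exists ε > 0 and a completion Y(1)* ∈ [y_min, y_max]^N agreeing with the observed treated outcomes such that for every assignment x in the support of the design, the difference in means |(1/N₁)∑ᵢ Yᵢ(1)*·𝟙(xᵢ=1) − (1/N₀)∑ᵢ Yᵢ(1)*·𝟙(xᵢ=0)| ≥ ε. Consequently, the worst-case probability p̲(K) of K-approximate balance is exactly 0 for all K ∈ [0, ε). -/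
open Finset

attribute [local instance] Classical.propDecidable

/-- Difference in means of `A` across the two groups of assignment `x`. -/
noncomputable def DIM (N : ℕ) (A : Fin N → ℝ) (x : Fin N → Bool) : ℝ :=
  gmean N x true A - gmean N x false A

/-- Support of the uniform randomization design: assignments with exactly `N₁` treated. -/
def Assign (N N₁ : ℕ) : Finset (Fin N → Bool) :=
  Finset.univ.filter (fun x => (grp N x true).card = N₁)

/-- Design probability of an event under uniform randomization. -/
noncomputable def designProb (N N₁ : ℕ) (E : (Fin N → Bool) → Prop) : ℝ :=
  (((Assign N N₁).filter E).card : ℝ) / ((Assign N N₁).card : ℝ)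

/-- Worst-case design probability of `K`-approximate mean balance, given realized
assignment `X` and observed outcomes `Yobs`. -/
noncomputable def pbar (N N₁ : ℕ) (ymin ymax : ℝ) (X : Fin N → Bool) (Yobs : Fin N → ℝ)
    (K : ℝ) : ℝ :=
  sInf {p : ℝ | ∃ Y1 Y0 : Fin N → ℝ,
    (∀ i, Y1 i ∈ Set.Icc ymin ymax) ∧ (∀ i, Y0 i ∈ Set.Icc ymin ymax) ∧
    (∀ i, X i = true → Y1 i = Yobs i) ∧ (∀ i, X i = false → Y0 i = Yobs i) ∧
    p = designProb N N₁ (fun xnew => |DIM N Y1 xnew| ≤ K ∧ |DIM N Y0 xnew| ≤ K)}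

/-- Completion of the treated outcome vector: observed values on treated units,
`t` at the chosen control unit `j0`, and `ymin` at other control units. -/
noncomputable def comp (N : ℕ) (X : Fin N → Bool) (Yobs : Fin N → ℝ) (ymin : ℝ)
    (j0 : Fin N) (t : ℝ) (i : Fin N) : ℝ :=
  if X i = true then Yobs i else if i = j0 then t else ymin

lemma comp_diff {N : ℕ} {X : Fin N → Bool} {Yobs : Fin N → ℝ} {ymin : ℝ} {j0 : Fin N}
    (hj0 : X j0 = false) (s t : ℝ) (i : Fin N) :
    comp N X Yobs ymin j0 t i - comp N X Yobs ymin j0 s i = if i = j0 then t - s else 0 := by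
  by_cases hi : i = j0
  · subst hi; simp [comp, hj0]
  · by_cases hXi : X i = true <;> simp [comp, hi, hXi]

lemma grp_card_add {N : ℕ} (x : Fin N → Bool) :
    (grp N x true).card + (grp N x false).card = N := by
  have h : (Finset.univ.filter (fun i => x i = true)).card
      + (Finset.univ.filter (fun i => ¬ (x i = true))).card = (Finset.univ : Finset (Fin N)).card :=
    Finset.card_filter_add_card_filter_not _
  have h2 : (Finset.univ.filter (fun i => ¬ (x i = true))) = grp N x false := by
    apply Finset.filter_congr
    intro i _
    simp [Bool.not_eq_true]
  rw [h2] at h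
  simpa [grp] using h

/-- For `x` in the support, `DIM` of the completion is affine in `t` with nonzero slope. -/
lemma dim_slope {N N₁ : ℕ} {X : Fin N → Bool} {Yobs : Fin N → ℝ} {ymin : ℝ} {j0 : Fin N}
    (hj0 : X j0 = false) (hN₁pos : 0 < N₁) (hN₁lt : N₁ < N)
    {x : Fin N → Bool} (hx : x ∈ Assign N N₁) :
    ∃ c : ℝ, c ≠ 0 ∧ ∀ s t : ℝ,
      DIM N (comp N X Yobs ymin j0 t) x - DIM N (comp N X Yobs ymin j0 s) x = (t - s) * c := by
  have hct : (grp N x true).card = N₁ := (Finset.mem_filter.mp hx).2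
  have hcf : (grp N x false).card = N - N₁ := by
    have := grp_card_add x; omega
  have hsum : ∀ (b : Bool) (s t : ℝ),
      (∑ i ∈ grp N x b, comp N X Yobs ymin j0 t i)
        - (∑ i ∈ grp N x b, comp N X Yobs ymin j0 s i)
      = if j0 ∈ grp N x b then t - s else 0 := by
    intro b s t
    rw [← Finset.sum_sub_distrib]
    calc (∑ i ∈ grp N x b, (comp N X Yobs ymin j0 t i - comp N X Yobs ymin j0 s i))
        = ∑ i ∈ grp N x b, (if i = j0 then t - s else 0) := by
          apply Finset.sum_congr rfl; intro i _; exact comp_diff hj0 s t i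
      _ = if j0 ∈ grp N x b then t - s else 0 := Finset.sum_ite_eq' _ _ _
  have hdim : ∀ s t : ℝ,
      DIM N (comp N X Yobs ymin j0 t) x - DIM N (comp N X Yobs ymin j0 s) x
      = (if j0 ∈ grp N x true then t - s else 0) / (N₁ : ℝ)
        - (if j0 ∈ grp N x false then t - s else 0) / ((N - N₁ : ℕ) : ℝ) := by
    intro s t
    unfold DIM gmean
    rw [hct, hcf]
    rw [← hsum true s t, ← hsum false s t]
    ring
  have hN₁R : (N₁ : ℝ) ≠ 0 := Nat.cast_ne_zero.mpr (by omega)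
  have hN₀R : ((N - N₁ : ℕ) : ℝ) ≠ 0 := Nat.cast_ne_zero.mpr (by omega)
  by_cases hmem : j0 ∈ grp N x true
  · have hnot : j0 ∉ grp N x false := by
      simp only [grp, Finset.mem_filter] at hmem ⊢
      simp [hmem.2]
    refine ⟨1 / (N₁ : ℝ), by simpa using hN₁R, fun s t => ?_⟩
    rw [hdim s t, if_pos hmem, if_neg hnot]
    field_simp
    ring
  · have hmem' : j0 ∈ grp N x false := by
      simp only [grp, Finset.mem_filter] at hmem ⊢
      simpa [Bool.not_eq_true] using hmem
    refine ⟨-(1 / ((N - N₁ : ℕ) : ℝ)), by simpa using hN₀R, fun s t => ?_⟩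
    rw [hdim s t, if_neg hmem, if_pos hmem']
    field_simp
    ring

lemma designProb_zero {N N₁ : ℕ} {E : (Fin N → Bool) → Prop}
    (h : ∀ x ∈ Assign N N₁, ¬ E x) : designProb N N₁ E = 0 := by
  unfold designProb
  rw [Finset.filter_eq_empty_iff.mpr h]
  simp

/-- there is an `ε > 0` and a completion of the treated potential outcome
vector consistent with the data whose difference in means is at least `ε` in magnitude
under every assignment in the support of the design; consequently `p̲(K) = 0` for all
`K ∈ [0, ε)`. -/
theorem statement10
    (N N₁ : ℕ) (hN : 2 ≤ N)
    (ymin ymax : ℝ) (hy : ymin < ymax)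
    (X : Fin N → Bool) (Yobs : Fin N → ℝ)
    (hX : (grp N X true).card = N₁) (hN₁pos : 0 < N₁) (hN₁lt : N₁ < N)
    (hbdd : ∀ i, Yobs i ∈ Set.Icc ymin ymax) :
    ∃ ε > 0,
      (∃ Ystar : Fin N → ℝ,
        (∀ i, X i = true → Ystar i = Yobs i) ∧
        (∀ i, Ystar i ∈ Set.Icc ymin ymax) ∧
        ∀ x ∈ Assign N N₁, ε ≤ |DIM N Ystar x|) ∧
      ∀ K, 0 ≤ K → K < ε → pbar N N₁ ymin ymax X Yobs K = 0 := by
  -- find a control unit j0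
  obtain ⟨j0, hj0⟩ : ∃ j, X j = false := by
    by_contra h
    push_neg at h
    have hall : ∀ j, X j = true := by
      intro j; cases hXj : X j
      · exact absurd hXj (h j)
      · rfl
    have huniv : grp N X true = Finset.univ := by
      ext i; simp [grp, hall i]
    rw [huniv] at hX
    simp [Finset.card_univ] at hX
    omega
  -- the root-selecting function
  set Yc : ℝ → Fin N → ℝ := fun t => comp N X Yobs ymin j0 t with hYc
  set f : (Fin N → Bool) → ℝ := fun x =>
    if h : ∃ r : ℝ, DIM N (Yc r) x = 0 then h.choose else 0 with hf
  obtain ⟨t, htIcc, htbad⟩ :=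
    (Set.Icc_infinite hy).exists_notMem_finset ((Assign N N₁).image f)
  -- the chosen completion avoids all roots
  have hne : ∀ x ∈ Assign N N₁, DIM N (Yc t) x ≠ 0 := by
    intro x hx h0
    have hex : ∃ r : ℝ, DIM N (Yc r) x = 0 := ⟨t, h0⟩
    have hfx : f x = hex.choose := by rw [hf]; simp only [dif_pos hex]
    have hroot : DIM N (Yc (f x)) x = 0 := by rw [hfx]; exact hex.choose_spec
    obtain ⟨c, hc, hlin⟩ := dim_slope hj0 hN₁pos hN₁lt hx
    have hdiff := hlin (f x) t
    rw [h0, hroot] at hdiff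
    have h2 : (t - f x) * c = 0 := by linarith
    have : t = f x := by
      rcases mul_eq_zero.mp h2 with h3 | h3
      · linarith [sub_eq_zero.mp h3]
      · exact absurd h3 hc
    exact htbad (this ▸ Finset.mem_image_of_mem f hx)
  have hXmem : X ∈ Assign N N₁ := Finset.mem_filter.mpr ⟨Finset.mem_univ _, hX⟩
  have himg : ((Assign N N₁).image (fun x => |DIM N (Yc t) x|)).Nonempty :=
    ⟨_, Finset.mem_image_of_mem _ hXmem⟩
  set ε : ℝ := ((Assign N N₁).image (fun x => |DIM N (Yc t) x|)).min' himg with hε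
  have hεle : ∀ x ∈ Assign N N₁, ε ≤ |DIM N (Yc t) x| := fun x hx =>
    Finset.min'_le _ _ (Finset.mem_image_of_mem _ hx)
  have hεpos : 0 < ε := by
    obtain ⟨x, hx, hxval⟩ := Finset.mem_image.mp (Finset.min'_mem _ himg)
    rw [hε, ← hxval]
    exact abs_pos.mpr (hne x hx)
  refine ⟨ε, hεpos, ⟨Yc t, ?_, ?_, hεle⟩, ?_⟩
  · intro i hi; simp [hYc, comp, hi]
  · intro i
    by_cases hXi : X i = true
    · simpa [hYc, comp, hXi] using hbdd i
    · by_cases hij : i = j0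
      · subst hij; simpa [hYc, comp, hj0] using htIcc
      · simp only [hYc, comp, hXi, hij, if_false]
        exact ⟨le_refl _, hy.le⟩
  · intro K hK0 hKε
    set S : Set ℝ := {p : ℝ | ∃ Y1 Y0 : Fin N → ℝ,
      (∀ i, Y1 i ∈ Set.Icc ymin ymax) ∧ (∀ i, Y0 i ∈ Set.Icc ymin ymax) ∧
      (∀ i, X i = true → Y1 i = Yobs i) ∧ (∀ i, X i = false → Y0 i = Yobs i) ∧
      p = designProb N N₁ (fun xnew => |DIM N Y1 xnew| ≤ K ∧ |DIM N Y0 xnew| ≤ K)} with hS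
    have hmem : (0 : ℝ) ∈ S := by
      refine ⟨Yc t, fun i => if X i = false then Yobs i else ymin, ?_, ?_, ?_, ?_, ?_⟩
      · intro i
        by_cases hXi : X i = true
        · simpa [hYc, comp, hXi] using hbdd i
        · by_cases hij : i = j0
          · subst hij; simpa [hYc, comp, hj0] using htIcc
          · simp only [hYc, comp, hXi, hij, if_false]
            exact ⟨le_refl _, hy.le⟩
      · intro i
        by_cases hXi : X i = false
        · simpa [hXi] using hbdd i
        · simp only [hXi, if_false]
          exact ⟨le_refl _, hy.le⟩
      · intro i hi; simp [hYc, comp, hi]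
      · intro i hi; simp [hi]
      · refine (designProb_zero ?_).symm
        rintro x hx ⟨h1, _⟩
        exact absurd h1 (not_le.mpr (lt_of_lt_of_le hKε (hεle x hx)))
    have hlb : ∀ p ∈ S, (0 : ℝ) ≤ p := by
      rintro p ⟨Y1, Y0, _, _, _, _, hp⟩
      rw [hp]
      exact div_nonneg (Nat.cast_nonneg _) (Nat.cast_nonneg _)
    have : pbar N N₁ ymin ymax X Yobs K = sInf S := rfl
    rw [this]
    exact le_antisymm (csInf_le ⟨0, hlb⟩ hmem) (le_csInf ⟨0, hmem⟩ hlb)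
end
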